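/- Let (W,S) be a Coxeter system and let Γ be an S-labeled digraph. Then Γ is a W-digraph if and only if Γ_rev is a W-digraph. -/

import Mathlib

open Finsupp

set_option synthInstance.maxHeartbeats 1000000
set_option maxHeartbeats 1000000

noncomputable section

/-- The field `ℚ(u)` of rational functions. -/
abbrev Kq : Type := RatFunc ℚ

/-- The indeterminate `u`. -/
def uu : Kq := RatFunc.X

/-- An `S`-labeled digraph on vertex type `V` with labels in `B`:
`Edge a b s d` means there is an edge from `a` to `b` labeled `s`, which is
dashed if `d = true` and solid if `d = false`.  There are no loops, and every
vertex occurs in exactly one edge with any given label. -/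
structure SLabeledDigraph (V B : Type*) where
  Edge : V → V → B → Bool → Prop
  no_loop : ∀ v s d, ¬ Edge v v s d
  unique_edge : ∀ v s, ∃! e : V × V × Bool,
    (e.1 = v ∨ e.2.1 = v) ∧ Edge e.1 e.2.1 s e.2.2

namespace SLabeledDigraph

variable {V B : Type*} (Γ : SLabeledDigraph V B)

/-- Swap the endpoints of an edge datum. -/
def eswap {V : Type*} (e : V × V × Bool) : V × V × Bool := (e.2.1, e.1, e.2.2)

/-- The reversed digraph `Γ_rev`, with all edge directions reversed but types
and labels kept. -/
def rev : SLabeledDigraph V B where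
  Edge a b s d := Γ.Edge b a s d
  no_loop v s d := Γ.no_loop v s d
  unique_edge v s := by
    obtain ⟨e, ⟨hinc, hedge⟩, huniq⟩ := Γ.unique_edge v s
    refine ⟨eswap e, ⟨Or.symm hinc, hedge⟩, ?_⟩
    rintro e' ⟨hinc', hedge'⟩
    have h1 : eswap e' = e := huniq (eswap e') ⟨Or.symm hinc', hedge'⟩
    calc e' = eswap (eswap e') := rfl
    _ = eswap e := by rw [h1]

/-- The restriction `Γ_J`: same vertices, only edges with labels in `J`. -/
def restrict (J : Set B) : SLabeledDigraph V J where
  Edge a b s d := Γ.Edge a b s.1 d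
  no_loop v s d := Γ.no_loop v s.1 d
  unique_edge v s := Γ.unique_edge v s.1

/-- Directed adjacency (ignoring labels and edge types). -/
def DAdj (a b : V) : Prop := ∃ s d, Γ.Edge a b s d

/-- Undirected adjacency. -/
def UAdj (a b : V) : Prop := Γ.DAdj a b ∨ Γ.DAdj b a

/-- `Γ` is connected if any two vertices are joined by an undirected path. -/
def Connected : Prop := ∀ a b : V, Relation.ReflTransGen Γ.UAdj a b

/-- A source is a vertex at which no edge ends. -/
def IsSource (a : V) : Prop := ∀ b s d, ¬ Γ.Edge b a s d

/-- A sink is a vertex at which no edge begins. -/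
def IsSink (a : V) : Prop := ∀ b s d, ¬ Γ.Edge a b s d

/-- `Γ` is acyclic if it has no nonempty directed circuit. -/
def Acyclic : Prop := ∀ a : V, ¬ Relation.TransGen Γ.DAdj a a

/-- The setoid whose classes are the connected components of `Γ`. -/
def compSetoid : Setoid V :=
  ⟨Relation.ReflTransGen Γ.UAdj,
    ⟨fun _ => Relation.ReflTransGen.refl,
     fun h => (@Relation.ReflTransGen.stdSymm _ Γ.UAdj ⟨fun _ _ hab => Or.symm hab⟩).symm _ _ h,
     fun h1 h2 => Relation.ReflTransGen.trans h1 h2⟩⟩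

end SLabeledDigraph

/-- The Hecke algebra of a Coxeter system over `ℚ(u)`: an associative
`ℚ(u)`-algebra `H` with basis `{T_w : w ∈ W}` such that `T_1 = 1` and
`T_s T_w = T_{sw}` if `ℓ(sw) > ℓ(w)`, while
`T_s T_w = u² T_{sw} + (u² - 1) T_w` if `ℓ(sw) < ℓ(w)`. -/
structure HeckeAlgebra {B W : Type*} [Group W] {M : CoxeterMatrix B}
    (cs : CoxeterSystem M W) (H : Type*) [Ring H] [Algebra Kq H] where
  T : W → H
  basis : Module.Basis W Kq H
  basis_eq : ∀ w, basis w = T w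
  T_one : T 1 = 1
  T_mul_of_lt : ∀ (i : B) (w : W), cs.length w < cs.length (cs.simple i * w) →
    T (cs.simple i) * T w = T (cs.simple i * w)
  T_mul_of_gt : ∀ (i : B) (w : W), cs.length (cs.simple i * w) < cs.length w →
    T (cs.simple i) * T w = (uu ^ 2) • T (cs.simple i * w) + (uu ^ 2 - 1) • T w

variable {B W : Type*} [Group W] {M : CoxeterMatrix B}
variable {H : Type*} [Ring H] [Algebra Kq H]

/-- `ρ` is the representation of `H` on `M(Γ)` (the `ℚ(u)`-vector space with
basis the vertices of `Γ`) in which each `T_s` acts by the operator `τ_s`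
determined by the edges of `Γ`. -/
def WDigraphRep {V : Type*} (cs : CoxeterSystem M W) (ha : HeckeAlgebra cs H)
    (Γ : SLabeledDigraph V B)
    (ρ : H →ₐ[Kq] Module.End Kq (V →₀ Kq)) : Prop :=
  ∀ (a b : V) (i : B),
    (Γ.Edge a b i false →
      ρ (ha.T (cs.simple i)) (single a (1 : Kq)) = single b (1 : Kq) ∧
      ρ (ha.T (cs.simple i)) (single b (1 : Kq))
        = (uu ^ 2 - 1) • single b (1 : Kq) + (uu ^ 2) • single a (1 : Kq)) ∧
    (Γ.Edge a b i true →
      ρ (ha.T (cs.simple i)) (single a (1 : Kq)) = uu • single a (1 : Kq) + (uu + 1) • single b (1 : Kq) ∧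
      ρ (ha.T (cs.simple i)) (single b (1 : Kq))
        = (uu ^ 2 - uu - 1) • single b (1 : Kq) + (uu ^ 2 - uu) • single a (1 : Kq))

/-- `Γ` is a `W`-digraph: the assignment `T_s ↦ τ_s` extends to a
representation of `H` on `M(Γ)`. -/
def IsWDigraph {V : Type*} (cs : CoxeterSystem M W) (ha : HeckeAlgebra cs H)
    (Γ : SLabeledDigraph V B) : Prop :=
  ∃ ρ : H →ₐ[Kq] Module.End Kq (V →₀ Kq), WDigraphRep cs ha Γ ρ

/-! Let `x ↦ x̄` be the involution of `ℚ(u)` with `ū = -u⁻¹`. The map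
`ψ (Σ c_w T_w) = Σ c̄_w T_{w⁻¹}⁻¹` is a ring endomorphism of `H`, semilinear over this involution:
on the basis this reduces to `ψ (T_s T_w) = T_s⁻¹ ψ (T_w)`, which follows from the quadratic
relation satisfied by `T_s⁻¹ = u⁻² T_s + (u⁻² - 1)`. Conjugating `ρ ∘ ψ` by the coordinatewise
involution of `M(Γ)` therefore turns a representation `ρ` of `H` on `M(Γ)` into another one, in
which `T_s` sends a vertex `α` with `τ_s α = c α + d β` to `(u² c̄ + u² - 1) α + u² d̄ β`. On every
solid and every dashed edge this exchanges the formulas at its two ends, so it is the action of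
`τ_s` for `Γ_rev`; since reversal is an involution, this gives both directions. -/

lemma uu_ne_zero : uu ≠ 0 := RatFunc.X_ne_zero

lemma uu_sq_ne_zero : uu ^ 2 ≠ 0 := pow_ne_zero 2 uu_ne_zero

lemma transcendental_uu : Transcendental ℚ uu := by
  -- the library lemma uses the `ℚ`-algebra structure of `RatFunc ℚ` obtained through `ℚ[X]`
  convert RatFunc.transcendental_X (K := ℚ)
  · exact Subsingleton.elim _ _
  · rfl

lemma transcendental_neg_inv_uu : Transcendental ℚ (-uu⁻¹) := fun h ↦
  transcendental_uu (by simpa using h.neg.inv)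

def negInv : Kq →+* Kq :=
  RatFunc.liftRingHom (Polynomial.aeval (-uu⁻¹)).toRingHom <|
    nonZeroDivisors_le_comap_nonZeroDivisors_of_injective _ <|
      transcendental_iff_injective.mp transcendental_neg_inv_uu

lemma negInv_uu : negInv uu = -uu⁻¹ := by
  rw [uu, ← RatFunc.algebraMap_X, negInv, RatFunc.liftRingHom_algebraMap]
  simp [uu]

lemma negInv_negInv (x : Kq) : negInv (negInv x) = x := by
  suffices h : negInv.comp negInv = RingHom.id Kq from RingHom.congr_fun h x
  refine IsLocalization.ringHom_ext (nonZeroDivisors (Polynomial ℚ))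
    (Polynomial.ringHom_ext' (Subsingleton.elim _ _) ?_)
  change negInv (negInv uu) = uu
  rw [negInv_uu, map_neg, map_inv₀, negInv_uu, inv_neg, inv_inv, neg_neg]

instance : RingHomInvPair negInv negInv :=
  ⟨RingHom.ext negInv_negInv, RingHom.ext negInv_negInv⟩

lemma negInv_uu_sq : negInv (uu ^ 2) = (uu ^ 2)⁻¹ := by
  rw [map_pow, negInv_uu, neg_sq, inv_pow]

lemma negInv_inv_uu_sq : negInv (uu ^ 2)⁻¹ = uu ^ 2 := by
  rw [map_inv₀, negInv_uu_sq, inv_inv]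

def negInvₛₗ : Kq →ₛₗ[negInv] Kq where
  toFun := negInv
  map_add' := negInv.map_add
  map_smul' := negInv.map_mul

def mapRangeNegInv (α : Type*) : (α →₀ Kq) ≃ₛₗ[negInv] (α →₀ Kq) :=
  LinearEquiv.ofInvolutive (mapRange.linearMap negInvₛₗ) fun x ↦ by
    ext; simp [negInvₛₗ]

lemma mapRangeNegInv_apply {α : Type*} (x : α →₀ Kq) (a : α) :
    mapRangeNegInv α x a = negInv (x a) := rfl

lemma mapRangeNegInv_symm (α : Type*) : (mapRangeNegInv α).symm = mapRangeNegInv α := rfl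

lemma mapRangeNegInv_single {α : Type*} (a : α) (c : Kq) :
    mapRangeNegInv α (single a c) = single a (negInv c) :=
  mapRange_single (hf := map_zero _)

namespace HeckeAlgebra

variable {cs : CoxeterSystem M W} (ha : HeckeAlgebra cs H)

lemma T_simple_mul_self (i : B) : ha.T (cs.simple i) * ha.T (cs.simple i)
    = (uu ^ 2) • (1 : H) + (uu ^ 2 - 1) • ha.T (cs.simple i) := by
  have h := ha.T_mul_of_gt i (cs.simple i) (by simp [cs.length_simple])
  rwa [cs.simple_mul_simple_self, ha.T_one] at h

def invSimple (i : B) : H := (uu ^ 2)⁻¹ • ha.T (cs.simple i) + ((uu ^ 2)⁻¹ - 1) • 1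

lemma T_simple_mul_invSimple (i : B) : ha.T (cs.simple i) * ha.invSimple i = 1 := by
  have hq : (uu ^ 2)⁻¹ * (uu ^ 2 - 1) + ((uu ^ 2)⁻¹ - 1) = 0 := by
    field_simp [uu_ne_zero]
    ring
  rw [invSimple, mul_add, mul_smul_comm, mul_smul_comm, mul_one, T_simple_mul_self, smul_add,
    smul_smul, smul_smul, add_assoc, ← add_smul, inv_mul_cancel₀ uu_sq_ne_zero, hq, one_smul,
    zero_smul, add_zero]

lemma commute_T_simple_invSimple (i : B) : Commute (ha.T (cs.simple i)) (ha.invSimple i) :=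
  ((Commute.refl _).smul_right _).add_right ((Commute.one_right _).smul_right _)

def unitSimple (i : B) : Hˣ :=
  ⟨ha.T (cs.simple i), ha.invSimple i, ha.T_simple_mul_invSimple i,
    (ha.commute_T_simple_invSimple i).eq ▸ ha.T_simple_mul_invSimple i⟩

lemma isUnit_T_simple (i : B) : IsUnit (ha.T (cs.simple i)) := (ha.unitSimple i).isUnit

lemma inverse_T_simple (i : B) : Ring.inverse (ha.T (cs.simple i)) = ha.invSimple i :=
  Ring.inverse_unit (ha.unitSimple i)

lemma invSimple_mul_self (i : B) : ha.invSimple i * ha.invSimple i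
    = (uu ^ 2)⁻¹ • (1 : H) + ((uu ^ 2)⁻¹ - 1) • ha.invSimple i := by
  nth_rw 2 [invSimple]
  rw [mul_add, mul_smul_comm, mul_smul_comm, mul_one, ← (ha.commute_T_simple_invSimple i).eq,
    T_simple_mul_invSimple]

lemma T_wordProd {ω : List B} (hω : cs.IsReduced ω) :
    ha.T (cs.wordProd ω) = (ω.map fun i ↦ ha.T (cs.simple i)).prod := by
  induction ω with
  | nil => simp [ha.T_one]
  | cons i ω ih =>
    have hω' : cs.IsReduced ω := by simpa using hω.drop 1
    have hlen : cs.length (cs.wordProd ω) < cs.length (cs.simple i * cs.wordProd ω) := by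
      rw [← cs.wordProd_cons, hω, hω']
      simp
    rw [cs.wordProd_cons, ← ha.T_mul_of_lt i _ hlen, ih hω', List.map_cons, List.prod_cons]

def barT (w : W) : H := Ring.inverse (ha.T w⁻¹)

lemma inverse_prod_reverse_T_simple (ω : List B) :
    Ring.inverse (ω.reverse.map fun i ↦ ha.T (cs.simple i)).prod = (ω.map ha.invSimple).prod := by
  induction ω with
  | nil => simp
  | cons i ω ih =>
    rw [List.reverse_cons, List.map_append, List.prod_append, List.map_singleton,
      List.prod_singleton, Ring.inverse_mul (.inr (ha.isUnit_T_simple i)), ih,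
      inverse_T_simple, List.map_cons, List.prod_cons]

lemma barT_wordProd {ω : List B} (hω : cs.IsReduced ω) :
    ha.barT (cs.wordProd ω) = (ω.map ha.invSimple).prod := by
  rw [barT, ← cs.wordProd_reverse, ha.T_wordProd hω.reverse, inverse_prod_reverse_T_simple]

lemma barT_simple_mul {i : B} {w : W} (h : cs.length w < cs.length (cs.simple i * w)) :
    ha.barT (cs.simple i * w) = ha.invSimple i * ha.barT w := by
  obtain ⟨ω, hω, rfl⟩ := cs.exists_isReduced w
  have hiω : cs.IsReduced (i :: ω) := by
    have := cs.length_simple_mul (cs.wordProd ω) i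
    rw [CoxeterSystem.IsReduced, cs.wordProd_cons, List.length_cons, ← hω.eq]
    omega
  rw [← cs.wordProd_cons, ha.barT_wordProd hiω, ha.barT_wordProd hω, List.map_cons,
    List.prod_cons]

lemma barT_simple (i : B) : ha.barT (cs.simple i) = ha.invSimple i := by
  rw [barT, cs.inv_simple, inverse_T_simple]

def bar : H →ₛₗ[negInv] H :=
  (linearCombination Kq ha.barT).comp
    ((mapRangeNegInv W).toLinearMap.comp ha.basis.repr.toLinearMap)

lemma bar_T (w : W) : ha.bar (ha.T w) = ha.barT w := by
  simp [bar, ← ha.basis_eq, mapRangeNegInv_single]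

lemma bar_T_simple_mul_T (i : B) (w : W) :
    ha.bar (ha.T (cs.simple i) * ha.T w) = ha.invSimple i * ha.barT w := by
  rcases lt_or_gt_of_ne (cs.length_simple_mul_ne w i) with hlt | hgt
  · have hw : ha.barT w = ha.invSimple i * ha.barT (cs.simple i * w) := by
      simpa using ha.barT_simple_mul (i := i) (w := cs.simple i * w) (by simpa using hlt)
    rw [ha.T_mul_of_gt i w hlt, map_add, map_smulₛₗ, map_smulₛₗ, bar_T, bar_T, negInv_uu_sq,
      map_sub, map_one, negInv_uu_sq, hw, ← mul_assoc, invSimple_mul_self, add_mul,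
      smul_mul_assoc, smul_mul_assoc, one_mul]
  · rw [ha.T_mul_of_lt i w hgt, bar_T, ha.barT_simple_mul hgt]

lemma bar_T_simple_mul (i : B) (x : H) :
    ha.bar (ha.T (cs.simple i) * x) = ha.invSimple i * ha.bar x := by
  have key : ha.bar.comp (LinearMap.mulLeft Kq (ha.T (cs.simple i)))
      = (LinearMap.mulLeft Kq (ha.invSimple i)).comp ha.bar :=
    ha.basis.ext fun w ↦ by simp [ha.basis_eq, bar_T_simple_mul_T, bar_T]
  exact LinearMap.congr_fun key x

lemma bar_prod_mul (ω : List B) (x : H) :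
    ha.bar ((ω.map fun i ↦ ha.T (cs.simple i)).prod * x)
      = (ω.map ha.invSimple).prod * ha.bar x := by
  induction ω with
  | nil => simp
  | cons i ω ih => simp only [List.map_cons, List.prod_cons, mul_assoc, bar_T_simple_mul, ih]

lemma bar_T_mul (w : W) (x : H) : ha.bar (ha.T w * x) = ha.barT w * ha.bar x := by
  obtain ⟨ω, hω, rfl⟩ := cs.exists_isReduced w
  rw [ha.T_wordProd hω, bar_prod_mul, ha.barT_wordProd hω]

lemma bar_mul (x y : H) : ha.bar (x * y) = ha.bar x * ha.bar y := by
  have key : ha.bar.comp (LinearMap.mulRight Kq y)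
      = (LinearMap.mulRight Kq (ha.bar y)).comp ha.bar :=
    ha.basis.ext fun w ↦ by simp [ha.basis_eq, bar_T_mul, bar_T]
  exact LinearMap.congr_fun key x

lemma bar_one : ha.bar 1 = 1 := by
  rw [← ha.T_one, bar_T, barT, inv_one, ha.T_one, Ring.inverse_one]

def barRingHom : H →+* H where
  toFun := ha.bar
  map_one' := ha.bar_one
  map_mul' := ha.bar_mul
  map_zero' := map_zero ha.bar
  map_add' := map_add ha.bar

end HeckeAlgebra

section RevRep

variable {V : Type*} {cs : CoxeterSystem M W} (ha : HeckeAlgebra cs H)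

def revRep (ρ : H →ₐ[Kq] Module.End Kq (V →₀ Kq)) : H →ₐ[Kq] Module.End Kq (V →₀ Kq) where
  __ := (LinearEquiv.conjRingEquiv (mapRangeNegInv V)).toRingHom.comp
    (ρ.toRingHom.comp ha.barRingHom)
  commutes' c := by
    ext v
    simp [HeckeAlgebra.barRingHom, Algebra.algebraMap_eq_smul_one, ha.bar_one, mapRangeNegInv_symm,
      mapRangeNegInv_apply]
    rw [← smul_eq_mul, ← Finsupp.smul_apply, smul_single_one]

lemma revRep_T_simple_single {ρ : H →ₐ[Kq] Module.End Kq (V →₀ Kq)} {i : B} {a b : V}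
    {c d : Kq} (h : ρ (ha.T (cs.simple i)) (single a 1) = c • single a 1 + d • single b 1) :
    revRep ha ρ (ha.T (cs.simple i)) (single a 1)
      = (uu ^ 2 * negInv c + (uu ^ 2 - 1)) • single a 1 + (uu ^ 2 * negInv d) • single b 1 := by
  have hinv : ρ (ha.invSimple i) (single a 1)
      = ((uu ^ 2)⁻¹ * c + ((uu ^ 2)⁻¹ - 1)) • single a 1 + ((uu ^ 2)⁻¹ * d) • single b 1 := by
    simp only [HeckeAlgebra.invSimple, map_add, map_smul, map_one, LinearMap.add_apply,
      LinearMap.smul_apply, Module.End.one_apply, h]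
    rw [smul_add, smul_smul, smul_smul, add_right_comm, ← add_smul]
  change mapRangeNegInv V (ρ (ha.bar _) ((mapRangeNegInv V).symm (single a 1))) = _
  rw [ha.bar_T, ha.barT_simple, mapRangeNegInv_symm, mapRangeNegInv_single, map_one, hinv, map_add,
    map_smulₛₗ, map_smulₛₗ, mapRangeNegInv_single, mapRangeNegInv_single, map_one, map_add,
    map_mul, map_mul, map_sub, map_one, negInv_inv_uu_sq]

end RevRep

theorem IsWDigraph.rev {V : Type*} {cs : CoxeterSystem M W} {ha : HeckeAlgebra cs H}
    {Γ : SLabeledDigraph V B} (hΓ : IsWDigraph cs ha Γ) : IsWDigraph cs ha Γ.rev := by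
  obtain ⟨ρ, hρ⟩ := hΓ
  obtain ⟨e₁, e₂, e₃, e₄, e₅, e₆⟩ :
      uu ^ 2 * negInv (uu ^ 2 - 1) + (uu ^ 2 - 1) = 0 ∧ uu ^ 2 * negInv (uu ^ 2) = 1 ∧
      uu ^ 2 * negInv (uu ^ 2 - uu - 1) + (uu ^ 2 - 1) = uu ∧
      uu ^ 2 * negInv (uu ^ 2 - uu) = uu + 1 ∧
      uu ^ 2 * negInv uu + (uu ^ 2 - 1) = uu ^ 2 - uu - 1 ∧
      uu ^ 2 * negInv (uu + 1) = uu ^ 2 - uu := by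
    have := uu_ne_zero
    simp only [map_add, map_sub, map_pow, map_one, negInv_uu]
    refine ⟨?_, ?_, ?_, ?_, ?_, ?_⟩ <;> field_simp <;> ring
  refine ⟨revRep ha ρ, fun a b i ↦ ⟨fun hab ↦ ?_, fun hab ↦ ?_⟩⟩
  · obtain ⟨hTb, hTa⟩ := (hρ b a i).1 hab
    constructor
    · rw [revRep_T_simple_single _ hTa, e₁, e₂, zero_smul, zero_add, one_smul]
    · rw [revRep_T_simple_single _ (c := 0) (d := 1) (by rw [hTb, zero_smul, zero_add, one_smul]),
        map_zero, map_one, mul_zero, zero_add, mul_one]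
  · obtain ⟨hTb, hTa⟩ := (hρ b a i).2 hab
    exact ⟨by rw [revRep_T_simple_single _ hTa, e₃, e₄],
      by rw [revRep_T_simple_single _ hTb, e₅, e₆]⟩

/-- An `S`-labeled digraph `Γ` is a `W`-digraph if and only if
its reversal `Γ_rev` is a `W`-digraph. -/
theorem wdigraph_rev_iff {V : Type*} (cs : CoxeterSystem M W) (ha : HeckeAlgebra cs H)
    (Γ : SLabeledDigraph V B) :
    IsWDigraph cs ha Γ ↔ IsWDigraph cs ha Γ.rev :=
  ⟨IsWDigraph.rev, IsWDigraph.rev⟩
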